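/- Let g ∈ ℝⁿ be nonzero, H a symmetric n×n matrix with all eigenvalues of absolute value at most σ, α > 0, and J = I + α·(I - (g/‖g‖₂)(g/‖g‖₂)ᵀ)·(H/‖g‖₂). Then for every a ∈ ℝⁿ, ‖Jᵀ a‖₂ ≤ (1 + α·σ/‖g‖₂)·‖a‖₂. -/

import Mathlib

/-!
Since `H` and `P = I - u uᵀ` are symmetric, `Jᵀ = I + (α / ‖g‖) H P`. With `‖u‖ = 1`, `P` is the
orthogonal projection onto `u⊥`, hence a contraction, and expanding in an orthonormal eigenbasis
of `H` gives `‖H x‖ ≤ σ ‖x‖`; the triangle inequality then bounds `‖Jᵀ a‖`.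
-/

open Matrix RealInnerProductSpace

theorem OrthonormalBasis.norm_apply_le_of_apply_eq_smul {𝕜 ι E : Type*} [RCLike 𝕜] [Fintype ι]
    [NormedAddCommGroup E] [InnerProductSpace 𝕜 E] (b : OrthonormalBasis ι 𝕜 E)
    (T : E →ₗ[𝕜] E) (μ : ι → ℝ) (hT : ∀ i, T (b i) = (μ i : 𝕜) • b i)
    {σ : ℝ} (hσ : ∀ i, |μ i| ≤ σ) (x : E) : ‖T x‖ ≤ σ * ‖x‖ := by
  rcases isEmpty_or_nonempty ι with hι | ⟨⟨i₀⟩⟩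
  · simp [b.repr.injective (Subsingleton.elim (b.repr x) (b.repr 0))]
  have hσ0 : 0 ≤ σ := (abs_nonneg _).trans (hσ i₀)
  have hrepr : ∀ i, b.repr (T x) i = μ i * b.repr x i := by
    classical
    intro i
    conv_lhs => rw [← b.sum_repr x]
    simp [hT, smul_smul, b.repr_self, Pi.single_apply, mul_comm]
  have hsq : ‖T x‖ ^ 2 ≤ (σ * ‖x‖) ^ 2 := by
    rw [← b.repr.norm_map, ← b.repr.norm_map x, mul_pow, EuclideanSpace.norm_sq_eq,
      EuclideanSpace.norm_sq_eq, Finset.mul_sum]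
    gcongr with i
    rw [hrepr, norm_mul, mul_pow, RCLike.norm_ofReal]
    gcongr
    exact hσ i
  exact (pow_le_pow_iff_left₀ (norm_nonneg _) (by positivity) two_ne_zero).1 hsq

theorem norm_sub_inner_smul_le {E : Type*} [NormedAddCommGroup E] [InnerProductSpace ℝ E]
    {e : E} (he : ‖e‖ = 1) (x : E) : ‖x - ⟪e, x⟫ • e‖ ≤ ‖x‖ := by
  have hproj : x - ⟪e, x⟫ • e = (ℝ ∙ e)ᗮ.starProjection x := by
    simp [Submodule.starProjection_singleton, he]
  rw [hproj]
  exact Submodule.norm_starProjection_apply_le _ x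

theorem Matrix.toEuclideanLin_one_sub_vecMulVec {n : Type*} [Fintype n] [DecidableEq n]
    (e x : EuclideanSpace ℝ n) :
    toEuclideanLin (1 - vecMulVec e.ofLp e.ofLp) x = x - ⟪e, x⟫ • e := by
  ext i
  simp [vecMulVec_mulVec, PiLp.inner_apply, dotProduct, mul_comm]

theorem Matrix.IsHermitian.norm_toEuclideanLin_le {n : Type*} [Fintype n] [DecidableEq n]
    {H : Matrix n n ℝ} (hH : H.IsHermitian) {σ : ℝ} (hσ : ∀ i, |hH.eigenvalues i| ≤ σ)
    (x : EuclideanSpace ℝ n) : ‖toEuclideanLin H x‖ ≤ σ * ‖x‖ :=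
  hH.eigenvectorBasis.norm_apply_le_of_apply_eq_smul _ _
    (fun i => by ext j; simpa using congrFun (hH.mulVec_eigenvectorBasis i) j) hσ x

/-- Proposition 1 (without projection): for J = I + α(I - uuᵀ)(H/‖g‖₂) with u = g/‖g‖₂,
H symmetric with eigenvalues bounded by σ in absolute value, one has
‖Jᵀ a‖₂ ≤ (1 + ασ/‖g‖₂)‖a‖₂. -/
theorem stmt_6 {n : ℕ} (g : EuclideanSpace ℝ (Fin n)) (hg : g ≠ 0)
    (H : Matrix (Fin n) (Fin n) ℝ) (hH : H.IsHermitian)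
    (σ : ℝ) (hσ : ∀ i, |hH.eigenvalues i| ≤ σ)
    (α : ℝ) (hα : 0 < α)
    (u : Fin n → ℝ) (hu : u = fun i => ‖g‖⁻¹ * g i)
    (J : Matrix (Fin n) (Fin n) ℝ)
    (hJ : J = 1 + α • ((1 - Matrix.vecMulVec u u) * (‖g‖⁻¹ • H))) :
    ∀ a : EuclideanSpace ℝ (Fin n),
      ‖Matrix.toEuclideanLin Jᵀ a‖ ≤ (1 + α * σ / ‖g‖) * ‖a‖ := by
  intro a
  have hg_pos : 0 < ‖g‖ := norm_pos_iff.2 hg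
  have hσ_nonneg : 0 ≤ σ := nonneg_of_mul_nonneg_left
    ((norm_nonneg _).trans (hH.norm_toEuclideanLin_le hσ g)) hg_pos
  set e : EuclideanSpace ℝ (Fin n) := ‖g‖⁻¹ • g
  have he : ‖e‖ = 1 := norm_smul_inv_norm hg
  have hue : u = e.ofLp := hu
  set P := 1 - vecMulVec e.ofLp e.ofLp
  have hJt : Jᵀ = 1 + (α * ‖g‖⁻¹) • (H * P) := by
    have hHt : Hᵀ = H := hH
    simp [hJ, hue, transpose_sub, hHt, smul_smul, P]
  have hc : 0 ≤ α * ‖g‖⁻¹ := by positivity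
  calc ‖toEuclideanLin Jᵀ a‖
      = ‖a + (α * ‖g‖⁻¹) • toEuclideanLin H (toEuclideanLin P a)‖ := by
        simp [hJt, toLpLin_mul_same]
    _ ≤ ‖a‖ + (α * ‖g‖⁻¹) * (σ * ‖toEuclideanLin P a‖) := by
        grw [norm_add_le, norm_smul, Real.norm_of_nonneg hc, hH.norm_toEuclideanLin_le hσ]
    _ ≤ ‖a‖ + (α * ‖g‖⁻¹) * (σ * ‖a‖) := by
        grw [toEuclideanLin_one_sub_vecMulVec, norm_sub_inner_smul_le he]
    _ = (1 + α * σ / ‖g‖) * ‖a‖ := by ring
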